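/- Let a > 0, α ∈ (0,1) and β ∈ ℝ. Then there exists a constant C > 0 such that for every t ∈ (0,a]: t^{α} ℓ_a(t)^{β} · ∫_0^t s^{−α} ℓ_a(s)^{1−β} ds ≤ C · ∫_0^t ℓ_a(s) ds. -/

import Mathlib

open MeasureTheory Set Real

/-! Write `ℓ = ℓ_a = logWeight a`. For `0 < s ≤ t ≤ a` one has `ℓ(s) = ℓ(t) + log (t / s)` with `ℓ(t) ≥ 1`, so
`ℓ(s) ≤ ℓ(t) (1 + log (t / s))`; since logarithms grow more slowly than any power, this gives
`ℓ(s)^γ ≤ K (t / s)^ε ℓ(t)^γ` for every real `γ` and every `ε > 0`. Taking `ε = (1 - α) / 2`, the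
weight `s^(-α - ε)` is still integrable at `0`, whence
`∫_0^t s^(-α) ℓ(s)^(1-β) ds ≲ t^(1-α) ℓ(t)^(1-β)`. The left-hand side is therefore `≲ t ℓ(t)`,
which is at most `∫_0^t ℓ` because `ℓ` is decreasing. -/

noncomputable def logWeight (a s : ℝ) : ℝ := log (exp 1 * a / s)

lemma setIntegral_Ioo_rpow {t q : ℝ} (ht : 0 < t) (hq : -1 < q) :
    ∫ s in Ioo 0 t, s ^ q = t ^ (q + 1) / (q + 1) := by
  rw [← integral_Ioc_eq_integral_Ioo, ← intervalIntegral.integral_of_le ht.le,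
    integral_rpow (Or.inl hq), zero_rpow (by linarith), sub_zero]

lemma rpow_mul_rpow_one_sub {x : ℝ} (hx : 0 < x) (p : ℝ) : x ^ p * x ^ (1 - p) = x := by
  rw [← rpow_add hx, add_sub_cancel, rpow_one]

lemma one_add_log_le_mul_rpow {r δ : ℝ} (hr : 1 ≤ r) (hδ : 0 < δ) :
    1 + log r ≤ (1 + δ⁻¹) * r ^ δ := by
  have hlog := log_le_rpow_div (zero_le_one.trans hr) hδ
  have hpow := one_le_rpow hr hδ.le
  calc 1 + log r ≤ r ^ δ + r ^ δ / δ := by linarith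
    _ = (1 + δ⁻¹) * r ^ δ := by ring

section logWeight

variable {a s t : ℝ}

lemma logWeight_eq_add_log_div (ha : a ≠ 0) (hs : s ≠ 0) (ht : t ≠ 0) :
    logWeight a s = logWeight a t + log (t / s) := by
  rw [logWeight, logWeight, ← log_mul (by positivity) (div_ne_zero ht hs)]
  congr 1
  field_simp

lemma logWeight_self (ha : a ≠ 0) : logWeight a a = 1 := by
  rw [logWeight, mul_div_assoc, div_self ha, mul_one, log_exp]

lemma logWeight_le_logWeight (ha : a ≠ 0) (hs : 0 < s) (hst : s ≤ t) :
    logWeight a t ≤ logWeight a s := by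
  rw [logWeight_eq_add_log_div ha hs.ne' (hs.trans_le hst).ne']
  linarith [log_nonneg ((one_le_div hs).mpr hst)]

lemma one_le_logWeight (ht : 0 < t) (hta : t ≤ a) : 1 ≤ logWeight a t := by
  have ha : a ≠ 0 := (ht.trans_le hta).ne'
  simpa [logWeight_self ha] using logWeight_le_logWeight ha ht hta

lemma integrableOn_logWeight (ha : a ≠ 0) (ht : 0 < t) :
    IntegrableOn (logWeight a) (Ioo 0 t) := by
  have hlog : IntegrableOn log (Ioo 0 t) :=
    (intervalIntegrable_iff_integrableOn_Ioo_of_le ht.le).1 intervalIntegral.intervalIntegrable_log'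
  have hconst : IntegrableOn (fun _ => log (exp 1 * a)) (Ioo 0 t) := integrableOn_const (by simp)
  refine (hconst.sub hlog).congr_fun (fun s hs => ?_) measurableSet_Ioo
  rw [logWeight, log_div (by positivity) hs.1.ne']
  rfl

lemma mul_logWeight_le_setIntegral (ht : 0 < t) (hta : t ≤ a) :
    t * logWeight a t ≤ ∫ s in Ioo 0 t, logWeight a s := by
  have ha : a ≠ 0 := (ht.trans_le hta).ne'
  have hconst : ∫ _ in Ioo 0 t, logWeight a t = t * logWeight a t := by
    rw [setIntegral_const, volume_real_Ioo_of_le ht.le, sub_zero, smul_eq_mul]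
  rw [← hconst]
  exact setIntegral_mono_on (integrableOn_const (by simp)) (integrableOn_logWeight ha ht)
    measurableSet_Ioo fun s hs => logWeight_le_logWeight ha hs.1 hs.2.le

end logWeight

lemma exists_logWeight_rpow_le (γ : ℝ) {ε : ℝ} (hε : 0 < ε) :
    ∃ K, 0 < K ∧ ∀ a s t : ℝ, 0 < s → s ≤ t → t ≤ a →
      logWeight a s ^ γ ≤ K * (t / s) ^ ε * logWeight a t ^ γ := by
  rcases le_or_gt γ 0 with hγ | hγ
  · refine ⟨1, one_pos, fun a s t hs hst hta => ?_⟩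
    have ha : a ≠ 0 := (hs.trans_le (hst.trans hta)).ne'
    have hLt := one_le_logWeight (hs.trans_le hst) hta
    calc logWeight a s ^ γ ≤ logWeight a t ^ γ :=
          rpow_le_rpow_of_nonpos (by linarith) (logWeight_le_logWeight ha hs hst) hγ
      _ ≤ 1 * (t / s) ^ ε * logWeight a t ^ γ := by
          rw [one_mul]
          exact le_mul_of_one_le_left (rpow_nonneg (by linarith) _)
            (one_le_rpow ((one_le_div hs).mpr hst) hε.le)
  · refine ⟨(1 + (ε / γ)⁻¹) ^ γ, by positivity, fun a s t hs hst hta => ?_⟩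
    have ht := hs.trans_le hst
    have ha : a ≠ 0 := (ht.trans_le hta).ne'
    have hLt := one_le_logWeight ht hta
    have hr : 1 ≤ t / s := (one_le_div hs).mpr hst
    have hLs : logWeight a s ≤ logWeight a t * ((1 + (ε / γ)⁻¹) * (t / s) ^ (ε / γ)) :=
      calc logWeight a s = logWeight a t + log (t / s) :=
            logWeight_eq_add_log_div ha hs.ne' ht.ne'
        _ ≤ logWeight a t * (1 + log (t / s)) := by nlinarith [log_nonneg hr]
        _ ≤ _ := mul_le_mul_of_nonneg_left
            (one_add_log_le_mul_rpow hr (div_pos hε hγ)) (by linarith)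
    calc logWeight a s ^ γ
        ≤ (logWeight a t * ((1 + (ε / γ)⁻¹) * (t / s) ^ (ε / γ))) ^ γ :=
          rpow_le_rpow (by linarith [one_le_logWeight hs (hst.trans hta)]) hLs hγ.le
      _ = (1 + (ε / γ)⁻¹) ^ γ * (t / s) ^ ε * logWeight a t ^ γ := by
          rw [mul_rpow (by linarith) (by positivity), mul_rpow (by positivity) (by positivity),
            ← rpow_mul (by positivity), div_mul_cancel₀ ε hγ.ne']
          ring

lemma exists_setIntegral_rpow_mul_logWeight_rpow_le {α : ℝ} (hα : α < 1) (γ : ℝ) :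
    ∃ C, 0 < C ∧ ∀ a t : ℝ, 0 < t → t ≤ a →
      ∫ s in Ioo 0 t, s ^ (-α) * logWeight a s ^ γ ≤ C * t ^ (1 - α) * logWeight a t ^ γ := by
  obtain ⟨ε, hε, hαε⟩ : ∃ ε : ℝ, 0 < ε ∧ 1 - α = ε + ε := ⟨(1 - α) / 2, by linarith, by ring⟩
  obtain ⟨K, hK, hKb⟩ := exists_logWeight_rpow_le γ hε
  refine ⟨K / ε, by positivity, fun a t ht hta => ?_⟩
  have hq : -1 < -α - ε := by linarith
  set c := K * t ^ ε * logWeight a t ^ γ with hc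
  have hpt : ∀ s ∈ Ioo 0 t, s ^ (-α) * logWeight a s ^ γ ≤ c * s ^ (-α - ε) := by
    rintro s ⟨hs, hst⟩
    calc s ^ (-α) * logWeight a s ^ γ
        ≤ s ^ (-α) * (K * (t / s) ^ ε * logWeight a t ^ γ) :=
          mul_le_mul_of_nonneg_left (hKb a s t hs hst.le hta) (by positivity)
      _ = c * s ^ (-α - ε) := by
          rw [div_rpow ht.le hs.le, rpow_sub hs, rpow_neg hs.le]
          ring
  calc ∫ s in Ioo 0 t, s ^ (-α) * logWeight a s ^ γ
      ≤ ∫ s in Ioo 0 t, c * s ^ (-α - ε) := by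
        refine integral_mono_of_nonneg ?_
          (((intervalIntegral.integrableOn_Ioo_rpow_iff ht).2 hq).const_mul c) ?_
        · filter_upwards [self_mem_ae_restrict measurableSet_Ioo] with s hs
          exact mul_nonneg (rpow_nonneg hs.1.le _)
            (rpow_nonneg (by linarith [one_le_logWeight hs.1 (hs.2.le.trans hta)]) _)
        · filter_upwards [self_mem_ae_restrict measurableSet_Ioo] with s hs
          exact hpt s hs
    _ = K / ε * t ^ (1 - α) * logWeight a t ^ γ := by
        rw [integral_const_mul, setIntegral_Ioo_rpow ht hq, show -α - ε + 1 = ε by linarith,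
          hαε, rpow_add ht, hc]
        ring

theorem stmt_10_general (a α β : ℝ) (hα1 : α < 1) :
    ∃ C : ℝ, 0 < C ∧ ∀ t ∈ Ioc (0 : ℝ) a,
      t ^ α * Real.log (Real.exp 1 * a / t) ^ β *
          (∫ s in Ioo (0 : ℝ) t, s ^ (-α) * Real.log (Real.exp 1 * a / s) ^ (1 - β)) ≤
        C * ∫ s in Ioo (0 : ℝ) t, Real.log (Real.exp 1 * a / s) := by
  obtain ⟨C, hC, hCb⟩ := exists_setIntegral_rpow_mul_logWeight_rpow_le hα1 (1 - β)
  refine ⟨C, hC, fun t ⟨ht, hta⟩ => ?_⟩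
  show t ^ α * logWeight a t ^ β * (∫ s in Ioo 0 t, s ^ (-α) * logWeight a s ^ (1 - β)) ≤
    C * ∫ s in Ioo 0 t, logWeight a s
  have hL : 0 < logWeight a t := by linarith [one_le_logWeight ht hta]
  calc t ^ α * logWeight a t ^ β * (∫ s in Ioo 0 t, s ^ (-α) * logWeight a s ^ (1 - β))
      ≤ t ^ α * logWeight a t ^ β * (C * t ^ (1 - α) * logWeight a t ^ (1 - β)) :=
        mul_le_mul_of_nonneg_left (hCb a t ht hta) (by positivity)
    _ = C * ((t ^ α * t ^ (1 - α)) * (logWeight a t ^ β * logWeight a t ^ (1 - β))) := by ring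
    _ = C * (t * logWeight a t) := by rw [rpow_mul_rpow_one_sub ht, rpow_mul_rpow_one_sub hL]
    _ ≤ C * ∫ s in Ioo 0 t, logWeight a s :=
        mul_le_mul_of_nonneg_left (mul_logWeight_le_setIntegral ht hta) hC.le

/-- For `a > 0`, `α ∈ (0,1)`, `β ∈ ℝ`, with `ℓ_a(s) = log(e a / s)`,
one has `t^{α} ℓ_a(t)^{β} ∫_0^t s^{−α} ℓ_a(s)^{1−β} ds ≤ C ∫_0^t ℓ_a(s) ds` on `(0,a]`,
with `C` independent of `t`. -/
theorem stmt_10 (a α β : ℝ) (ha : 0 < a) (hα0 : 0 < α) (hα1 : α < 1) :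
    ∃ C : ℝ, 0 < C ∧ ∀ t ∈ Ioc (0 : ℝ) a,
      t ^ α * Real.log (Real.exp 1 * a / t) ^ β *
          (∫ s in Ioo (0 : ℝ) t, s ^ (-α) * Real.log (Real.exp 1 * a / s) ^ (1 - β)) ≤
        C * ∫ s in Ioo (0 : ℝ) t, Real.log (Real.exp 1 * a / s) :=
  stmt_10_general a α β hα1
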